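/- Fix 1 ≤ i ≤ n-1 and let M = M_{Q^{(i)}} over ℤ[z_1,…,z_{2n-1}] for the word Q^{(i)} = (i, i-1, …, 1, 2, 3, …, n-1, 0, n, n-1, …, i+1), and let A be the northwest (n+1)×(n+1) submatrix of M. Then: (a) every n×n minor of A (the determinant of the submatrix of A obtained by deleting one row and one column) is divisible by z_{n+i-1} in ℤ[z_1,…,z_{2n-1}]; (b) the determinant of the submatrix of M with rows {2,3,…,n+1} and columns {1,2,…,n} equals ±z_{n+i-1}. (The α = 0 case in the proof of Proposition 4.) -/

import Mathlib

open Matrix MvPolynomial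

/-- For `1 ≤ α ≤ n`, the `(2n+2) × (2n+2)` identity matrix modified by replacing the
`2 × 2` diagonal block in rows/columns `{α, α+1}` (1-based) by `[[-z,1],[1,0]]` and the
`2 × 2` diagonal block in rows/columns `{2n+2-α, 2n+3-α}` by `[[z,1],[1,0]]`; for
`α = 0`, the identity matrix with the central `4 × 4` diagonal block in rows/columns
`{n, n+1, n+2, n+3}` replaced by `[[-z,0,1,0],[0,z,0,1],[1,0,0,0],[0,1,0,0]]`. -/
def gMat {R : Type*} [CommRing R] (n : ℕ) (α : ℕ) (z : R) :
    Matrix (Fin (2 * n + 2)) (Fin (2 * n + 2)) R :=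
  Matrix.of fun i j =>
    let i' := (i : ℕ) + 1
    let j' := (j : ℕ) + 1
    if α = 0 then
      if i' = n ∧ j' = n then -z
      else if i' = n + 1 ∧ j' = n + 1 then z
      else if (i' = n ∧ j' = n + 2) ∨ (i' = n + 1 ∧ j' = n + 3) ∨
              (i' = n + 2 ∧ j' = n) ∨ (i' = n + 3 ∧ j' = n + 1) then 1
      else if i' = j' ∧ ¬(i' = n ∨ i' = n + 1 ∨ i' = n + 2 ∨ i' = n + 3) then 1
      else 0
    else
      if i' = α ∧ j' = α then -z
      else if i' = 2 * n + 2 - α ∧ j' = 2 * n + 2 - α then z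
      else if (i' = α ∧ j' = α + 1) ∨ (i' = α + 1 ∧ j' = α) ∨
              (i' = 2 * n + 2 - α ∧ j' = 2 * n + 3 - α) ∨
              (i' = 2 * n + 3 - α ∧ j' = 2 * n + 2 - α) then 1
      else if i' = j' ∧
          ¬(i' = α ∨ i' = α + 1 ∨ i' = 2 * n + 2 - α ∨ i' = 2 * n + 3 - α) then 1
      else 0

/-- The descending word `(a, a-1, …, b)`. -/
def descWord (a b : ℕ) : List ℕ := (List.range (a + 1 - b)).reverse.map (· + b)

/-- The ascending word `(a, a+1, …, b)`. -/
def ascWord (a b : ℕ) : List ℕ := (List.range (b + 1 - a)).map (· + a)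

/-- `Q_1 = (0, n-1, n-2, …, 2, 1, 2, 3, …, n-1, 0)`. -/
def wordQ1 (n : ℕ) : List ℕ := 0 :: (descWord (n - 1) 1 ++ ascWord 2 (n - 1) ++ [0])

/-- `Q_2 = (n, n-1, …, 2, 1, 2, …, n-1, n)`. -/
def wordQ2 (n : ℕ) : List ℕ := descWord n 1 ++ ascWord 2 n

/-- `Q^{(i)} = (i, i-1, …, 1, 2, 3, …, n-1, 0, n, n-1, …, i+1)`. -/
def wordQi (n i : ℕ) : List ℕ :=
  descWord i 1 ++ ascWord 2 (n - 1) ++ [0] ++ descWord n (i + 1)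

/-- `M_Q = g_{α_1}(z_1) · g_{α_2}(z_2) ⋯ g_{α_L}(z_L)` over `ℤ[z_1, z_2, …]`,
where `z_j` is the variable `X j`. -/
noncomputable def MQ (n : ℕ) (Q : List ℕ) :
    Matrix (Fin (2 * n + 2)) (Fin (2 * n + 2)) (MvPolynomial ℕ ℤ) :=
  (List.ofFn (fun l : Fin Q.length => gMat n (Q.get l) (X ((l : ℕ) + 1)))).prod

/-- The determinant of the northwest `α × α` submatrix. -/
noncomputable def nwDet {n : ℕ}
    (M : Matrix (Fin (2 * n + 2)) (Fin (2 * n + 2)) (MvPolynomial ℕ ℤ))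
    (α : ℕ) (h : α ≤ 2 * n + 2) : MvPolynomial ℕ ℤ :=
  (M.submatrix (Fin.castLE h) (Fin.castLE h)).det

/-!
For `1 ≤ α ≤ n` the matrix `g_α(z)` is block diagonal for the splitting of the indices into the
first and the last `n + 1`, so writing `M = M_{(i,…,1,2,…,n-1)} · g_0(z) · M_{(n,…,i+1)}` with
`z = z_{n+i-1}`, the northwest block factors as `A = P · D · S`: here `P` and `S` are products of
the northwest blocks of the `g_α`, each of determinant `-1`, and `D = diag(1,…,1,-z,z)`.
The `n × n` minors of `A` are, up to sign, the entries of `adj A = adj S · adj D · adj P`, and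
every entry of `adj D` is divisible by `z` because two diagonal entries of `D` are.
The minor in (b) is `±(adj A)_{n+1,1}`; since `P e_n = e_1` and
`(e_n + z_{n+i} e_{n+1})ᵀ S = e_{n+1}ᵀ`, this entry equals `det P · z · det S`.
-/

section Words

theorem mem_descWord {a b x : ℕ} (hx : x ∈ descWord a b) : b ≤ x ∧ x ≤ a := by
  simp only [descWord, List.mem_map, List.mem_reverse, List.mem_range] at hx
  omega

theorem mem_ascWord {a b x : ℕ} (hx : x ∈ ascWord a b) : a ≤ x ∧ x ≤ b := by
  simp only [ascWord, List.mem_map, List.mem_range] at hx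
  omega

@[simp]
theorem length_descWord (a b : ℕ) : (descWord a b).length = a + 1 - b := by
  simp [descWord]

@[simp]
theorem length_ascWord (a b : ℕ) : (ascWord a b).length = b + 1 - a := by
  simp [ascWord]

theorem descWord_eq_cons {a b : ℕ} (hb : 1 ≤ b) (h : b ≤ a) :
    descWord a b = a :: descWord (a - 1) b := by
  rw [descWord, descWord, show a + 1 - b = (a - 1 + 1 - b) + 1 by omega, List.range_succ]
  simp only [List.reverse_append, List.reverse_singleton, List.singleton_append, List.map_cons]
  congr 1
  omega

theorem descWord_eq_append {a b : ℕ} (h : b ≤ a) :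
    descWord a b = descWord a (b + 1) ++ [b] := by
  rw [descWord, descWord, show a + 1 - b = (a + 1 - (b + 1)) + 1 by omega,
    List.range_succ_eq_map]
  simp only [List.reverse_cons, List.map_append, List.map_reverse, List.map_map,
    List.map_cons, List.map_nil, zero_add]
  congr 3
  funext x
  simp only [Function.comp_apply]
  omega

theorem ascWord_succ {a b : ℕ} (h : a ≤ b + 1) :
    ascWord a (b + 1) = ascWord a b ++ [b + 1] := by
  rw [ascWord, ascWord, show b + 1 + 1 - a = (b + 1 - a) + 1 by omega, List.range_succ,
    List.map_append, List.map_singleton]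
  congr 2
  omega

end Words

section WordProd

variable {ι R : Type*} [Fintype ι] [DecidableEq ι] [Semiring R]

def wordProd (g : ℕ → R → Matrix ι ι R) : List ℕ → (ℕ → R) → Matrix ι ι R
  | [], _ => 1
  | a :: w, z => g a (z 0) * wordProd g w (fun l => z (l + 1))

@[simp]
theorem wordProd_nil (g : ℕ → R → Matrix ι ι R) (z : ℕ → R) : wordProd g [] z = 1 := rfl

theorem wordProd_cons (g : ℕ → R → Matrix ι ι R) (a : ℕ) (w : List ℕ) (z : ℕ → R) :
    wordProd g (a :: w) z = g a (z 0) * wordProd g w (fun l => z (l + 1)) := rfl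

theorem wordProd_append (g : ℕ → R → Matrix ι ι R) (u v : List ℕ) (z : ℕ → R) :
    wordProd g (u ++ v) z = wordProd g u z * wordProd g v (fun l => z (l + u.length)) := by
  induction u generalizing z with
  | nil => simp
  | cons a u ih =>
    simp only [List.cons_append, wordProd_cons, ih, mul_assoc, List.length_cons, add_assoc]

theorem wordProd_singleton (g : ℕ → R → Matrix ι ι R) (a : ℕ) (z : ℕ → R) :
    wordProd g [a] z = g a (z 0) := mul_one _

theorem wordProd_induction {g : ℕ → R → Matrix ι ι R} {w : List ℕ} (z : ℕ → R)
    {p : Matrix ι ι R → Prop} (one : p 1) (mul : ∀ M N, p M → p N → p (M * N))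
    (hg : ∀ a ∈ w, ∀ c, p (g a c)) : p (wordProd g w z) := by
  induction w generalizing z with
  | nil => exact one
  | cons a w ih =>
    exact mul _ _ (hg a (by simp) _) (ih _ fun b hb => hg b (List.mem_cons_of_mem a hb))

theorem det_wordProd {R : Type*} [CommRing R] {g : ℕ → R → Matrix ι ι R} {w : List ℕ}
    (z : ℕ → R) (hg : ∀ a ∈ w, ∀ c, (g a c).det = -1) :
    (wordProd g w z).det = (-1) ^ w.length := by
  induction w generalizing z with
  | nil => simp
  | cons a w ih =>
    rw [wordProd_cons, det_mul, hg a (by simp), ih _ fun b hb => hg b (List.mem_cons_of_mem a hb),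
      List.length_cons, pow_succ']

end WordProd

theorem MQ_eq_wordProd (n : ℕ) (Q : List ℕ) :
    MQ n Q = wordProd (gMat n) Q (fun l => X (l + 1)) := by
  suffices h : ∀ z : ℕ → MvPolynomial ℕ ℤ,
      (List.ofFn fun l : Fin Q.length => gMat n (Q.get l) (z l)).prod = wordProd (gMat n) Q z from
    h fun l => X (l + 1)
  induction Q with
  | nil => intro z; rfl
  | cons a Q ih =>
    intro z
    rw [List.ofFn_succ, List.prod_cons, wordProd_cons, ← ih]
    rfl

section NorthWest

variable {R : Type*} [CommRing R] {k m : ℕ}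

/-- `M.BlockTriangular (splitBlock m)` says that the southwest block of `M` (rows `≥ m`, columns
`< m`) vanishes, and `M.BlockTriangular (OrderDual.toDual ∘ splitBlock m)` that the northeast one
does. -/
def splitBlock (m : ℕ) (i : Fin k) : Bool := decide (m ≤ (i : ℕ))

theorem submatrix_castLE_mul_of_blockTriangular (h : m ≤ k) (M : Matrix (Fin k) (Fin k) R)
    {N : Matrix (Fin k) (Fin k) R} (hN : N.BlockTriangular (splitBlock m)) :
    (M * N).submatrix (Fin.castLE h) (Fin.castLE h) =
      M.submatrix (Fin.castLE h) (Fin.castLE h) * N.submatrix (Fin.castLE h) (Fin.castLE h) := by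
  ext p q
  refine (Fintype.sum_of_injective (Fin.castLE h) (Fin.castLE_injective h) _ _ ?_ fun _ => rfl).symm
  intro l hl
  have hml : m ≤ (l : ℕ) := by
    by_contra! hlt
    exact hl ⟨⟨l, hlt⟩, rfl⟩
  exact mul_eq_zero_of_right _ (hN (by simp [splitBlock, Bool.lt_iff, hml, q.isLt]))

theorem submatrix_castLE_mul_of_blockTriangular_toDual (h : m ≤ k)
    {M : Matrix (Fin k) (Fin k) R} (N : Matrix (Fin k) (Fin k) R)
    (hM : M.BlockTriangular (OrderDual.toDual ∘ splitBlock m)) :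
    (M * N).submatrix (Fin.castLE h) (Fin.castLE h) =
      M.submatrix (Fin.castLE h) (Fin.castLE h) * N.submatrix (Fin.castLE h) (Fin.castLE h) := by
  rw [← transpose_transpose (M * N), transpose_mul, ← transpose_submatrix,
    submatrix_castLE_mul_of_blockTriangular h _ (Matrix.blockTriangular_transpose_iff.mpr hM),
    transpose_mul, transpose_submatrix, transpose_submatrix, transpose_transpose,
    transpose_transpose]

end NorthWest

section GBlock

variable {R : Type*} [CommRing R] {m α : ℕ}

/-- The identity with `[[-z,1],[1,0]]` in the 0-based rows and columns `α - 1, α`. -/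
def gBlock (m α : ℕ) (z : R) : Matrix (Fin m) (Fin m) R :=
  of fun p q =>
    if (p : ℕ) + 1 = α ∧ (q : ℕ) + 1 = α then -z
    else if ((p : ℕ) + 1 = α ∧ (q : ℕ) = α) ∨ ((p : ℕ) = α ∧ (q : ℕ) + 1 = α) then 1
    else if p = q ∧ ¬((p : ℕ) + 1 = α ∨ (p : ℕ) = α) then 1
    else 0

theorem det_gBlock (h1 : 1 ≤ α) (h2 : α < m) (z : R) : (gBlock m α z).det = -1 := by
  set a : Fin m := ⟨α - 1, by omega⟩
  set b : Fin m := ⟨α, h2⟩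
  have hab : a ≠ b := by simp only [a, b, ne_eq, Fin.ext_iff]; omega
  have hfactor : gBlock m α z = transvection a b (-z) * (Equiv.swap a b).permMatrix R := by
    rw [Equiv.Perm.permMatrix, PEquiv.mul_toMatrix_toPEquiv, Equiv.symm_swap]
    ext p q
    have hq : ((Equiv.swap a b q : Fin m) : ℕ) =
        if (q : ℕ) + 1 = α then α else if (q : ℕ) = α then α - 1 else q := by
      rw [Equiv.swap_apply_def]
      split_ifs <;> simp only [Fin.ext_iff, a, b] at * <;> omega
    simp only [gBlock, of_apply, submatrix_apply, id, transvection, Matrix.add_apply, one_apply,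
      single_apply, Fin.ext_iff, hq, a, b]
    split_ifs <;> first | omega | simp
  rw [hfactor, det_mul, det_transvection_of_ne _ _ hab, det_permutation,
    Equiv.Perm.sign_swap hab]
  simp

theorem det_wordProd_gBlock (z : ℕ → R) {w : List ℕ} (hw : ∀ a ∈ w, 1 ≤ a ∧ a < m) :
    (wordProd (gBlock m) w z).det = (-1) ^ w.length :=
  det_wordProd z fun a ha => det_gBlock (hw a ha).1 (hw a ha).2

theorem gBlock_mulVec_single_of_eq (z : R) {p q : Fin m} (hp : (p : ℕ) + 1 = α)
    (hq : (q : ℕ) = α) : gBlock m α z *ᵥ Pi.single q 1 = Pi.single p 1 := by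
  ext r
  simp only [mulVec_single_one, col_apply, gBlock, of_apply, Pi.single_apply, Fin.ext_iff]
  split_ifs <;> first | omega | rfl

theorem gBlock_mulVec_single_of_ne (z : R) {q : Fin m} (h1 : (q : ℕ) + 1 ≠ α)
    (h2 : (q : ℕ) ≠ α) : gBlock m α z *ᵥ Pi.single q 1 = Pi.single q 1 := by
  ext r
  simp only [mulVec_single_one, col_apply, gBlock, of_apply, Pi.single_apply, Fin.ext_iff]
  split_ifs <;> first | omega | rfl

theorem single_vecMul_gBlock_of_ne (z : R) {p : Fin m} (h1 : (p : ℕ) + 1 ≠ α)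
    (h2 : (p : ℕ) ≠ α) : Pi.single p 1 ᵥ* gBlock m α z = Pi.single p 1 := by
  ext r
  simp only [single_one_vecMul, row_apply, gBlock, of_apply, Pi.single_apply, Fin.ext_iff]
  split_ifs <;> first | omega | rfl

theorem add_smul_single_vecMul_gBlock (z : R) {p q : Fin m} (hp : (p : ℕ) + 1 = α)
    (hq : (q : ℕ) = α) : (Pi.single p 1 + z • Pi.single q 1) ᵥ* gBlock m α z = Pi.single q 1 := by
  ext r
  simp only [add_vecMul, smul_vecMul, single_one_vecMul, Pi.add_apply, Pi.smul_apply,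
    row_apply, gBlock, of_apply, Pi.single_apply, Fin.ext_iff, smul_eq_mul]
  split_ifs <;> first | omega | ring

theorem wordProd_gBlock_mulVec_single_of_forall_ne (z : ℕ → R) {w : List ℕ} {q : Fin m}
    (hw : ∀ a ∈ w, (q : ℕ) + 1 ≠ a ∧ (q : ℕ) ≠ a) :
    wordProd (gBlock m) w z *ᵥ Pi.single q 1 = Pi.single q 1 :=
  wordProd_induction (p := fun M => M *ᵥ Pi.single q 1 = Pi.single q 1) z (one_mulVec _)
    (fun M N hM hN => by rw [← mulVec_mulVec, hN, hM])
    fun a ha c => gBlock_mulVec_single_of_ne c (hw a ha).1 (hw a ha).2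

theorem single_vecMul_wordProd_gBlock_of_forall_ne (z : ℕ → R) {w : List ℕ} {p : Fin m}
    (hw : ∀ a ∈ w, (p : ℕ) + 1 ≠ a ∧ (p : ℕ) ≠ a) :
    Pi.single p 1 ᵥ* wordProd (gBlock m) w z = Pi.single p 1 :=
  wordProd_induction (p := fun M => Pi.single p 1 ᵥ* M = Pi.single p 1) z (vecMul_one _)
    (fun M N hM hN => by rw [← vecMul_vecMul, hM, hN])
    fun a ha c => single_vecMul_gBlock_of_ne c (hw a ha).1 (hw a ha).2

theorem wordProd_gBlock_ascWord_mulVec_single (z : ℕ → R) {a b : ℕ} (ha : 1 ≤ a)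
    (hab : a ≤ b + 1) (hb : b < m) :
    wordProd (gBlock m) (ascWord a b) z *ᵥ Pi.single ⟨b, hb⟩ 1 =
      Pi.single ⟨a - 1, by omega⟩ 1 := by
  induction b with
  | zero =>
    obtain rfl : a = 1 := by omega
    rw [show ascWord 1 0 = [] from rfl, wordProd_nil, one_mulVec]
  | succ b ih =>
    rcases Nat.lt_or_ge (b + 1) a with hlt | hle
    · obtain rfl : a = b + 2 := by omega
      rw [show ascWord (b + 2) (b + 1) = [] by simp [ascWord], wordProd_nil, one_mulVec]
      rfl
    · rw [ascWord_succ hle, wordProd_append, wordProd_singleton, ← mulVec_mulVec,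
        gBlock_mulVec_single_of_eq _ (p := ⟨b, by omega⟩) rfl rfl, ih hle]

theorem wordProd_gBlock_descWord_mulVec_single (z : ℕ → R) {a : ℕ} (ha : 1 ≤ a) (hm : 1 < m) :
    wordProd (gBlock m) (descWord a 1) z *ᵥ Pi.single ⟨1, hm⟩ 1 =
      Pi.single ⟨0, by omega⟩ 1 := by
  rw [descWord_eq_append ha, wordProd_append, wordProd_singleton, ← mulVec_mulVec,
    gBlock_mulVec_single_of_eq _ (p := ⟨0, by omega⟩) rfl rfl]
  exact wordProd_gBlock_mulVec_single_of_forall_ne _ fun x hx => by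
    have := mem_descWord hx
    dsimp only
    omega

theorem vecMul_wordProd_gBlock_descWord (z : ℕ → R) {a b : ℕ} (hb : 1 ≤ b) (hab : b ≤ a)
    (ha : a < m) :
    (Pi.single ⟨a - 1, by omega⟩ 1 + z 0 • Pi.single ⟨a, ha⟩ 1) ᵥ*
        wordProd (gBlock m) (descWord a b) z = Pi.single ⟨a, ha⟩ 1 := by
  rw [descWord_eq_cons hb hab, wordProd_cons, ← vecMul_vecMul,
    add_smul_single_vecMul_gBlock _ (by dsimp only; omega) rfl]
  exact single_vecMul_wordProd_gBlock_of_forall_ne _ fun x hx => by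
    have := mem_descWord hx
    dsimp only
    omega

end GBlock

section GMat

variable {R : Type*} [CommRing R] {n α : ℕ}

def nwBlock (M : Matrix (Fin (2 * n + 2)) (Fin (2 * n + 2)) R) :
    Matrix (Fin (n + 1)) (Fin (n + 1)) R :=
  M.submatrix (Fin.castLE (by omega)) (Fin.castLE (by omega))

theorem gMat_blockTriangular (h1 : 1 ≤ α) (h2 : α ≤ n) (z : R) :
    (gMat n α z).BlockTriangular (splitBlock (n + 1)) := by
  intro i j hij
  simp only [splitBlock, Bool.lt_iff, decide_eq_false_iff_not, decide_eq_true_eq] at hij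
  simp only [gMat, of_apply]
  split_ifs <;> first | omega | rfl

theorem gMat_blockTriangular_toDual (h1 : 1 ≤ α) (h2 : α ≤ n) (z : R) :
    (gMat n α z).BlockTriangular (OrderDual.toDual ∘ splitBlock (n + 1)) := by
  intro i j hij
  simp only [Function.comp_apply, OrderDual.toDual_lt_toDual, splitBlock, Bool.lt_iff,
    decide_eq_false_iff_not, decide_eq_true_eq] at hij
  simp only [gMat, of_apply]
  split_ifs <;> first | omega | rfl

theorem nwBlock_gMat (h1 : 1 ≤ α) (h2 : α ≤ n) (z : R) :
    nwBlock (gMat n α z) = gBlock (n + 1) α z := by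
  ext p q
  simp only [nwBlock, submatrix_apply, gMat, gBlock, of_apply, Fin.val_castLE, Fin.ext_iff]
  split_ifs <;> first | omega | rfl

def g0Diag (n : ℕ) (z : R) : Fin (n + 1) → R :=
  fun k => if (k : ℕ) + 1 = n then -z else if (k : ℕ) = n then z else 1

theorem nwBlock_gMat_zero (z : R) : nwBlock (gMat n 0 z) = diagonal (g0Diag n z) := by
  ext p q
  simp only [nwBlock, submatrix_apply, gMat, g0Diag, diagonal_apply, of_apply, Fin.val_castLE,
    Fin.ext_iff]
  split_ifs <;> first | omega | rfl

theorem prod_erase_g0Diag (hn : 1 ≤ n) (z : R) :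
    ∏ j ∈ Finset.univ.erase (⟨n - 1, by omega⟩ : Fin (n + 1)), g0Diag n z j = z := by
  rw [Finset.prod_eq_single_of_mem (Fin.last n) (by simp [Fin.ext_iff]; omega)]
  · simp [g0Diag]
  · intro j hj hjn
    simp only [Finset.mem_erase, ne_eq, Fin.ext_iff, Fin.val_last] at hj hjn
    simp only [g0Diag]
    split_ifs <;> first | omega | rfl

variable (z : ℕ → R) {w : List ℕ} (hw : ∀ a ∈ w, 1 ≤ a ∧ a ≤ n)
include hw

theorem wordProd_gMat_blockTriangular :
    (wordProd (gMat n) w z).BlockTriangular (splitBlock (n + 1)) :=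
  wordProd_induction (p := (BlockTriangular · _)) z blockTriangular_one
    (fun _ _ => BlockTriangular.mul)
    fun a ha c => gMat_blockTriangular (hw a ha).1 (hw a ha).2 c

theorem wordProd_gMat_blockTriangular_toDual :
    (wordProd (gMat n) w z).BlockTriangular (OrderDual.toDual ∘ splitBlock (n + 1)) :=
  wordProd_induction (p := (BlockTriangular · _)) z blockTriangular_one
    (fun _ _ => BlockTriangular.mul)
    fun a ha c => gMat_blockTriangular_toDual (hw a ha).1 (hw a ha).2 c

theorem nwBlock_wordProd_gMat :
    nwBlock (wordProd (gMat n) w z) = wordProd (gBlock (n + 1)) w z := by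
  induction w generalizing z with
  | nil => exact submatrix_one _ (Fin.castLE_injective _)
  | cons a w ih =>
    have ha := hw a (by simp)
    rw [wordProd_cons, wordProd_cons, nwBlock,
      submatrix_castLE_mul_of_blockTriangular_toDual _ _ (gMat_blockTriangular_toDual ha.1 ha.2 _),
      ← nwBlock, ← nwBlock, nwBlock_gMat ha.1 ha.2,
      ih _ fun b hb => hw b (List.mem_cons_of_mem a hb)]

end GMat

section Adjugate

variable {ι R : Type*} [Fintype ι] [DecidableEq ι] [CommRing R]

theorem dvd_adjugate_diagonal_apply {v : ι → R} {z : R} {p q : ι} (hpq : p ≠ q)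
    (hp : z ∣ v p) (hq : z ∣ v q) (i j : ι) : z ∣ adjugate (diagonal v) i j := by
  rw [adjugate_diagonal, diagonal_apply]
  split_ifs with hij
  · by_cases hi : i = p
    · exact hq.trans (Finset.dvd_prod_of_mem _ (by simp [hi, hpq.symm]))
    · exact hp.trans (Finset.dvd_prod_of_mem _ (by simp [Ne.symm hi]))
  · exact dvd_zero z

theorem dvd_adjugate_mul_mul_apply (P D S : Matrix ι ι R) {z : R}
    (hD : ∀ i j, z ∣ adjugate D i j) (i j : ι) : z ∣ adjugate (P * D * S) i j := by
  rw [adjugate_mul_distrib, adjugate_mul_distrib, mul_apply]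
  refine Finset.dvd_sum fun k _ => Dvd.dvd.mul_left ?_ _
  rw [mul_apply]
  exact Finset.dvd_sum fun l _ => (hD k l).mul_right _

theorem dvd_det_submatrix_succAbove {m : ℕ} {A : Matrix (Fin (m + 1)) (Fin (m + 1)) R} {z : R}
    (h : ∀ i j, z ∣ adjugate A i j) (r c : Fin (m + 1)) :
    z ∣ (A.submatrix r.succAbove c.succAbove).det := by
  have hcr := h c r
  rwa [adjugate_fin_succ_eq_det_submatrix, (isUnit_neg_one.pow _).dvd_mul_left] at hcr

theorem adjugate_mul_diagonal_mul_apply {P S : Matrix ι ι R} (v : ι → R) {u : ι → R}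
    {p k l : ι} (hP : P *ᵥ Pi.single p 1 = Pi.single l 1) (hS : u ᵥ* S = Pi.single k 1) :
    adjugate (P * diagonal v * S) k l = P.det * (∏ j ∈ Finset.univ.erase p, v j) * S.det * u p := by
  have hP' : adjugate P *ᵥ Pi.single l 1 = P.det • Pi.single p 1 := by
    rw [← hP, mulVec_mulVec, adjugate_mul, smul_mulVec, one_mulVec]
  have hS' : Pi.single k 1 ᵥ* adjugate S = S.det • u := by
    rw [← hS, vecMul_vecMul, mul_adjugate, vecMul_smul, vecMul_one]
  calc adjugate (P * diagonal v * S) k l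
      = (Pi.single k 1 ᵥ* adjugate S) ⬝ᵥ
          (adjugate (diagonal v) *ᵥ (adjugate P *ᵥ Pi.single l 1)) := by
        rw [dotProduct_mulVec, dotProduct_mulVec, vecMul_vecMul, vecMul_vecMul, dotProduct_single,
          single_one_vecMul, adjugate_mul_distrib, adjugate_mul_distrib, row_apply, mul_one]
    _ = _ := by
        rw [hS', hP', mulVec_smul, adjugate_diagonal, diagonal_mulVec_single, smul_dotProduct,
          dotProduct_smul]
        simp [mul_comm, mul_assoc]

theorem det_submatrix_succ_castSucc_eq {m : ℕ} {P S : Matrix (Fin (m + 1)) (Fin (m + 1)) R}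
    (v : Fin (m + 1) → R) {u : Fin (m + 1) → R} {p : Fin (m + 1)}
    (hP : P *ᵥ Pi.single p 1 = Pi.single 0 1) (hS : u ᵥ* S = Pi.single (Fin.last m) 1) :
    ((P * diagonal v * S).submatrix Fin.succ Fin.castSucc).det =
      (-1) ^ m * (P.det * (∏ j ∈ Finset.univ.erase p, v j) * S.det * u p) := by
  have hcof := adjugate_fin_succ_eq_det_submatrix (P * diagonal v * S) (Fin.last m) 0
  rw [adjugate_mul_diagonal_mul_apply v hP hS, Fin.succAbove_zero, Fin.succAbove_last,
    Fin.val_zero, Fin.val_last, zero_add] at hcof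
  rw [hcof, ← mul_assoc, ← pow_add, Even.neg_one_pow ⟨m, rfl⟩, one_mul]

theorem neg_one_pow_mul_eq_or (s : ℕ) (z : R) : (-1) ^ s * z = z ∨ (-1) ^ s * z = -z :=
  (neg_one_pow_eq_or R s).imp (fun h => by rw [h, one_mul]) fun h => by rw [h, neg_one_mul]

end Adjugate

section WordQi

variable {R : Type*} [CommRing R] {n i : ℕ}

theorem wordQi_prefix_bounds (hin : i ≤ n - 1) :
    ∀ a ∈ descWord i 1 ++ ascWord 2 (n - 1), 1 ≤ a ∧ a ≤ n := by
  intro a ha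
  rcases List.mem_append.mp ha with h | h
  · have := mem_descWord h; omega
  · have := mem_ascWord h; omega

theorem wordQi_suffix_bounds : ∀ a ∈ descWord n (i + 1), 1 ≤ a ∧ a ≤ n := by
  intro a ha
  have := mem_descWord ha; omega

variable (hi1 : 1 ≤ i) (hin : i ≤ n - 1)
include hi1 hin

theorem nwBlock_MQ_wordQi :
    nwBlock (MQ n (wordQi n i)) =
      wordProd (gBlock (n + 1)) (descWord i 1 ++ ascWord 2 (n - 1)) (fun l => X (l + 1)) *
        diagonal (g0Diag n (X (n + i - 1))) *
        wordProd (gBlock (n + 1)) (descWord n (i + 1)) (fun l => X (l + n + i)) := by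
  have hw1 := wordQi_prefix_bounds hin
  have hw2 := wordQi_suffix_bounds (n := n) (i := i)
  rw [MQ_eq_wordProd, wordQi, wordProd_append, wordProd_append, wordProd_singleton, nwBlock,
    submatrix_castLE_mul_of_blockTriangular _ _ (wordProd_gMat_blockTriangular _ hw2),
    submatrix_castLE_mul_of_blockTriangular_toDual _ _
      (wordProd_gMat_blockTriangular_toDual _ hw1),
    ← nwBlock, ← nwBlock, ← nwBlock, nwBlock_wordProd_gMat _ hw1, nwBlock_wordProd_gMat _ hw2,
    nwBlock_gMat_zero]
  simp only [List.length_append, length_descWord, length_ascWord, List.length_singleton]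
  congr 4
  · congr 1
    omega
  · funext l
    congr 1
    omega

theorem wordProd_gBlock_wordQi_prefix_mulVec (z : ℕ → R) :
    wordProd (gBlock (n + 1)) (descWord i 1 ++ ascWord 2 (n - 1)) z *ᵥ
      Pi.single ⟨n - 1, by omega⟩ 1 = Pi.single 0 1 := by
  rw [wordProd_append, ← mulVec_mulVec,
    wordProd_gBlock_ascWord_mulVec_single _ (by omega) (by omega) (by omega)]
  exact wordProd_gBlock_descWord_mulVec_single _ hi1 (by omega)

theorem dvd_adjugate_nwBlock_MQ_wordQi (k l : Fin (n + 1)) :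
    X (n + i - 1) ∣ adjugate (nwBlock (MQ n (wordQi n i))) k l := by
  have hne : (⟨n - 1, by omega⟩ : Fin (n + 1)) ≠ ⟨n, by omega⟩ := by simp [Fin.ext_iff]; omega
  rw [nwBlock_MQ_wordQi hi1 hin]
  refine dvd_adjugate_mul_mul_apply _ _ _ (dvd_adjugate_diagonal_apply hne ?_ ?_) k l <;>
    simp [g0Diag, show n - 1 + 1 = n by omega]

theorem det_submatrix_succ_castSucc_nwBlock_MQ_wordQi :
    ∃ s : ℕ, ((nwBlock (MQ n (wordQi n i))).submatrix Fin.succ Fin.castSucc).det =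
      (-1) ^ s * X (n + i - 1) := by
  have hne : (⟨n - 1, by omega⟩ : Fin (n + 1)) ≠ ⟨n, by omega⟩ := by simp [Fin.ext_iff]; omega
  have hS := vecMul_wordProd_gBlock_descWord (m := n + 1) (a := n) (b := i + 1)
    (fun l => (X (l + n + i) : MvPolynomial ℕ ℤ)) (by omega) (by omega) (by omega)
  refine ⟨n + (descWord i 1 ++ ascWord 2 (n - 1)).length + (descWord n (i + 1)).length, ?_⟩
  rw [nwBlock_MQ_wordQi hi1 hin,
    det_submatrix_succ_castSucc_eq _ (wordProd_gBlock_wordQi_prefix_mulVec hi1 hin _) hS,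
    prod_erase_g0Diag (by omega),
    det_wordProd_gBlock _ fun a ha => (wordQi_prefix_bounds hin a ha).imp_right Nat.lt_succ_of_le,
    det_wordProd_gBlock _ fun a ha => (wordQi_suffix_bounds a ha).imp_right Nat.lt_succ_of_le,
    Pi.add_apply, Pi.smul_apply, Pi.single_eq_same, Pi.single_eq_of_ne hne, smul_zero, add_zero]
  ring

end WordQi

/-- the `α = 0` case in the proof of Proposition 4: for
`M = M_{Q^{(i)}}` with `1 ≤ i ≤ n-1` and `A` the northwest `(n+1) × (n+1)` submatrix of
`M`: (a) every `n × n` minor of `A` is divisible by `z_{n+i-1}`; (b) the determinant of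
the submatrix of `M` with rows `{2,…,n+1}` and columns `{1,…,n}` equals `±z_{n+i-1}`. -/
theorem MQ_wordQi_minors (n : ℕ) (i : ℕ) (hi1 : 1 ≤ i) (hin : i ≤ n - 1) :
    let A : Matrix (Fin (n + 1)) (Fin (n + 1)) (MvPolynomial ℕ ℤ) :=
      (MQ n (wordQi n i)).submatrix (Fin.castLE (by omega)) (Fin.castLE (by omega))
    let d : MvPolynomial ℕ ℤ :=
      ((MQ n (wordQi n i)).submatrix
        (fun a : Fin n => (⟨(a : ℕ) + 1, by omega⟩ : Fin (2 * n + 2)))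
        (fun b : Fin n => (Fin.castLE (by omega) b : Fin (2 * n + 2)))).det
    (∀ r c : Fin (n + 1), X (n + i - 1) ∣ (A.submatrix r.succAbove c.succAbove).det) ∧
    (d = X (n + i - 1) ∨ d = -X (n + i - 1)) := by
  intro A d
  refine ⟨dvd_det_submatrix_succAbove (dvd_adjugate_nwBlock_MQ_wordQi hi1 hin), ?_⟩
  obtain ⟨s, hs⟩ := det_submatrix_succ_castSucc_nwBlock_MQ_wordQi hi1 hin
  rw [show d = (-1) ^ s * X (n + i - 1) from hs]
  exact neg_one_pow_mul_eq_or s _
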